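/- arXiv:2410.15993 — 3 statements merged into one kernel-verified Lean document; each statement's English description precedes it below -/
import Mathlib

section
/- There exists an even positive integer q, depending only on φ, with the following properties: (a) for every m ∈ ℕ and every j ∈ {1,2,3,4}, the j-th derivative of φ_m = Ψ_m ∘ φ is bounded on ℝ; (b) there exists a constant B̃ ∈ (0,∞), independent of m, such that |φ_m^{(j)}(x)| ≤ B̃(1+|x|^{j(m₁−1)}) for all x ∈ ℝ, all m ∈ ℕ and all j ∈ {1,2,3,4}. -/
/-!
Write `Ψ_a(y) = y / (1 + a y^q)`. By induction, `Ψ_1^{(i)} = P_i / (1 + y^q)^{i+1}` with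
`deg P_i ≤ q i` for `i ≥ 1`, so `|Ψ_1^{(i)}| ≤ M / (1 + y^q)`. Since `Ψ_a(y) = s⁻¹ Ψ_1(s y)` with
`s^q = a`, this gives `|Ψ_a^{(i)}(y)| ≤ M (1 + a)^4 / (1 + a y^q)` for `i ≤ 4`. The Faà di Bruno
bound, fed with `|φ^{(i)}(x)| ≤ ((1 + 2B)(1 + |x|^{m₁-1}))^i`, then bounds `|(Ψ_a ∘ φ)^{(j)}(x)|` by
`K (1 + a)^4 (1 + |x|^{j(m₁-1)}) / (1 + a φ(x)^q)`. Dropping the denominator gives (b), uniformly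
for `a ≤ α 0`; for (a), `φ(x)^q ≳ |x|^{m₀ q}` dominates `|x|^{j(m₁-1)}` once `m₀ q ≥ 4 m₁`.
-/

open Polynomial

noncomputable def psi (a : ℝ) (q : ℕ) (y : ℝ) : ℝ := y / (1 + a * y ^ q)

lemma one_add_mul_pow_pos {q : ℕ} (hq : Even q) {a : ℝ} (ha : 0 ≤ a) (y : ℝ) :
    0 < 1 + a * y ^ q := by
  have := mul_nonneg ha (hq.pow_nonneg y)
  linarith

lemma contDiff_psi {q : ℕ} (hq : Even q) {a : ℝ} (ha : 0 ≤ a) {n : WithTop ℕ∞} :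
    ContDiff ℝ n (psi a q) :=
  contDiff_id.div (contDiff_const.add (contDiff_const.mul (contDiff_id.pow q)))
    fun y => (one_add_mul_pow_pos hq ha y).ne'

lemma exists_polynomial_iteratedDeriv_psi_one {q : ℕ} (hq : Even q) (hq0 : 0 < q) (i : ℕ) :
    ∃ P : ℝ[X], P.natDegree + i ≤ q * i + 1 ∧
      iteratedDeriv i (psi 1 q) = fun z => P.eval z / (1 + z ^ q) ^ (i + 1) := by
  induction i with
  | zero => exact ⟨X, by simp, by ext z; simp [psi]⟩
  | succ i ih =>
    obtain ⟨P, hdeg, hP⟩ := ih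
    refine ⟨derivative P * (1 + X ^ q) - C ((i + 1 : ℕ) * q : ℝ) * X ^ (q - 1) * P, ?_, ?_⟩
    · have h₁ : (derivative P * (1 + X ^ q)).natDegree ≤ P.natDegree - 1 + q :=
        natDegree_mul_le.trans (_root_.add_le_add (natDegree_derivative_le P) (by compute_degree!))
      have h₂ : (C ((i + 1 : ℕ) * q : ℝ) * X ^ (q - 1) * P).natDegree ≤ q - 1 + P.natDegree :=
        natDegree_mul_le.trans (add_le_add_left (natDegree_C_mul_X_pow_le _ _) _)
      have hi : i ≤ q * i := Nat.le_mul_of_pos_left i hq0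
      have := natDegree_sub_le (derivative P * (1 + X ^ q))
        (C ((i + 1 : ℕ) * q : ℝ) * X ^ (q - 1) * P)
      rw [Nat.mul_succ]
      generalize q * i = t at *
      omega
    · ext z
      have hw₀ : 1 + z ^ q ≠ 0 := by simpa using (one_add_mul_pow_pos hq zero_le_one z).ne'
      have hw : (1 + z ^ q) ^ (i + 1) ≠ 0 := pow_ne_zero _ hw₀
      have hden := ((hasDerivAt_pow q z).const_add 1).fun_pow (i + 1)
      rw [iteratedDeriv_succ, hP, ((P.hasDerivAt z).fun_div hden hw).deriv]
      simp only [Nat.cast_add, Nat.cast_one, add_tsub_cancel_right, map_mul, map_add, map_natCast,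
        map_one, eval_sub, eval_mul, eval_add, eval_one, eval_pow, eval_X, eval_natCast]
      field_simp
      ring

lemma abs_pow_le_one_add_pow_pow {q n k : ℕ} (hq : Even q) (hk : k ≤ q * n) (z : ℝ) :
    |z| ^ k ≤ (1 + z ^ q) ^ n := by
  have hzq := hq.pow_nonneg z
  rcases le_total |z| 1 with h | h
  · calc |z| ^ k ≤ 1 := pow_le_one₀ (abs_nonneg z) h
      _ ≤ (1 + z ^ q) ^ n := one_le_pow₀ (by linarith)
  · calc |z| ^ k ≤ |z| ^ (q * n) := pow_le_pow_right₀ h hk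
      _ = (z ^ q) ^ n := by rw [pow_mul, hq.pow_abs]
      _ ≤ (1 + z ^ q) ^ n := pow_le_pow_left₀ hzq (by linarith) n

lemma Polynomial.exists_abs_eval_le_mul_one_add_pow_pow {q n : ℕ} (hq : Even q) (P : ℝ[X])
    (hP : P.natDegree ≤ q * n) : ∃ M, ∀ z, |P.eval z| ≤ M * (1 + z ^ q) ^ n := by
  refine ⟨∑ k ∈ Finset.range (P.natDegree + 1), |P.coeff k|, fun z => ?_⟩
  rw [eval_eq_sum_range, Finset.sum_mul]
  refine (Finset.abs_sum_le_sum_abs _ _).trans (Finset.sum_le_sum fun k hk => ?_)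
  rw [abs_mul, abs_pow]
  have hk : k ≤ q * n := (Finset.mem_range_succ_iff.mp hk).trans hP
  exact mul_le_mul_of_nonneg_left (abs_pow_le_one_add_pow_pow hq hk z) (abs_nonneg _)

lemma exists_abs_iteratedDeriv_succ_psi_one_le {q : ℕ} (hq : Even q) (hq0 : 0 < q) (i : ℕ) :
    ∃ M, ∀ z, |iteratedDeriv (i + 1) (psi 1 q) z| ≤ M / (1 + z ^ q) := by
  obtain ⟨P, hdeg, hP⟩ := exists_polynomial_iteratedDeriv_psi_one hq hq0 (i + 1)
  obtain ⟨M, hM⟩ := P.exists_abs_eval_le_mul_one_add_pow_pow hq (n := i + 1) (by omega)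
  refine ⟨M, fun z => ?_⟩
  have hw : 0 < 1 + z ^ q := by simpa using one_add_mul_pow_pos hq zero_le_one z
  rw [hP, abs_div, abs_of_pos (pow_pos hw _), div_le_div_iff₀ (pow_pos hw _) hw]
  calc |P.eval z| * (1 + z ^ q) ≤ M * (1 + z ^ q) ^ (i + 1) * (1 + z ^ q) := by
        gcongr; exact hM z
    _ = M * (1 + z ^ q) ^ (i + 1 + 1) := by ring

lemma psi_pow_eq {q : ℕ} {s : ℝ} (hs : s ≠ 0) :
    psi (s ^ q) q = fun y => s⁻¹ * psi 1 q (s * y) := by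
  ext y
  simp only [psi, one_mul, mul_pow]
  field_simp

lemma iteratedDeriv_succ_psi_pow {q : ℕ} (hq : Even q) {s : ℝ} (hs : s ≠ 0) (i : ℕ) (y : ℝ) :
    iteratedDeriv (i + 1) (psi (s ^ q) q) y = s ^ i * iteratedDeriv (i + 1) (psi 1 q) (s * y) := by
  rw [psi_pow_eq hs, iteratedDeriv_const_mul_field,
    iteratedDeriv_comp_const_mul (contDiff_psi hq zero_le_one)]
  field_simp
  ring

theorem exists_abs_iteratedDeriv_psi_le {q : ℕ} (hq : Even q) (hq0 : 0 < q) (N : ℕ) :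
    ∃ M > 0, ∀ a > 0, ∀ i, 1 ≤ i → i ≤ N → ∀ y,
      |iteratedDeriv i (psi a q) y| ≤ M * (1 + a) ^ N / (1 + a * y ^ q) := by
  choose M hM using exists_abs_iteratedDeriv_succ_psi_one_le hq hq0
  refine ⟨1 + ∑ i ∈ Finset.range N, |M i|, by positivity, fun a ha i hi1 hiN y => ?_⟩
  obtain ⟨i, rfl⟩ : ∃ i', i = i' + 1 := ⟨i - 1, by omega⟩
  obtain ⟨s, hs, hsq⟩ : ∃ s > 0, s ^ q = a :=
    ⟨a ^ (q⁻¹ : ℝ), by positivity, Real.rpow_inv_natCast_pow ha.le hq0.ne'⟩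
  have hMi : M i ≤ 1 + ∑ i ∈ Finset.range N, |M i| :=
    (le_abs_self _).trans ((Finset.single_le_sum (fun k _ => abs_nonneg (M k))
      (Finset.mem_range.mpr (by omega))).trans (le_add_of_nonneg_left zero_le_one))
  have hs_le : s ≤ 1 + a := by
    rcases le_total s 1 with h | h
    · linarith
    · linarith [le_self_pow₀ h hq0.ne']
  have hsi : s ^ i ≤ (1 + a) ^ N :=
    (pow_le_pow_left₀ hs.le hs_le i).trans (pow_le_pow_right₀ (by linarith) (by omega))
  rw [← hsq, iteratedDeriv_succ_psi_pow hq hs.ne', abs_mul, abs_pow, abs_of_pos hs, hsq]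
  have hw : 0 < 1 + a * y ^ q := one_add_mul_pow_pos hq ha.le y
  calc s ^ i * |iteratedDeriv (i + 1) (psi 1 q) (s * y)|
      ≤ (1 + a) ^ N * (M i / (1 + a * y ^ q)) := by
        gcongr
        simpa only [mul_pow, hsq] using hM i (s * y)
    _ ≤ (1 + a) ^ N * ((1 + ∑ i ∈ Finset.range N, |M i|) / (1 + a * y ^ q)) := by gcongr
    _ = _ := by ring

theorem abs_iteratedDeriv_comp_le {g f : ℝ → ℝ} {n : ℕ} (hg : ContDiff ℝ n g)
    (hf : ContDiff ℝ n f) (hn : 0 < n) (x : ℝ) {C D : ℝ} (hC0 : 0 ≤ C)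
    (hC : ∀ i, 1 ≤ i → i ≤ n → |iteratedDeriv i g (f x)| ≤ C)
    (hD : ∀ i, 1 ≤ i → i ≤ n → |iteratedDeriv i f x| ≤ D ^ i) :
    |iteratedDeriv n (g ∘ f) x| ≤ n.factorial * C * D ^ n := by
  -- the library bound also asks for `|g (f x)| ≤ C`, so first shift `g` to vanish at `f x`
  set g₀ : ℝ → ℝ := fun y => -g (f x) + g y
  have hshift : iteratedDeriv n (g ∘ f) x = iteratedDeriv n (g₀ ∘ f) x :=
    (iteratedDeriv_const_add hn _).symm
  rw [hshift, ← Real.norm_eq_abs, ← norm_iteratedFDeriv_eq_norm_iteratedDeriv]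
  refine norm_iteratedFDeriv_comp_le (contDiff_const.add hg) hf le_rfl x (fun i hi => ?_)
    fun i hi₁ hi => ?_
  · rcases i with _ | i
    · simpa [g₀] using hC0
    · rw [norm_iteratedFDeriv_eq_norm_iteratedDeriv, iteratedDeriv_const_add i.succ_pos]
      exact hC _ i.succ_pos hi
  · rw [norm_iteratedFDeriv_eq_norm_iteratedDeriv]
    exact hD i hi₁ hi

lemma pow_le_one_add_pow {t : ℝ} (ht : 0 ≤ t) {k l : ℕ} (hkl : k ≤ l) : t ^ k ≤ 1 + t ^ l := by
  rcases le_total t 1 with h | h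
  · linarith [pow_le_one₀ ht h (n := k), pow_nonneg ht l]
  · linarith [pow_le_pow_right₀ h hkl]

theorem abs_iteratedDeriv_comp_le_of_abs_iteratedDeriv_le {g φ : ℝ → ℝ} {n m₁ : ℕ} {B c : ℝ}
    (hg : ContDiff ℝ n g) (hφ : ContDiff ℝ n φ) (hB : 0 ≤ B)
    (hder : ∀ j : ℕ, j ≤ n → ∀ x : ℝ, |iteratedDeriv j φ x| ≤ B * (1 + |x| ^ (m₁ - j)))
    {j : ℕ} (hj : 1 ≤ j) (hjn : j ≤ n) (x : ℝ) (hc0 : 0 ≤ c)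
    (hc : ∀ i, 1 ≤ i → i ≤ j → |iteratedDeriv i g (φ x)| ≤ c) :
    |iteratedDeriv j (g ∘ φ) x| ≤
      n.factorial * (2 * (1 + 2 * B)) ^ n * c * (1 + |x| ^ (j * (m₁ - 1))) := by
  set t := |x| ^ (m₁ - 1)
  have ht : 0 ≤ t := by positivity
  have hD : ∀ i, 1 ≤ i → i ≤ j → |iteratedDeriv i φ x| ≤ ((1 + 2 * B) * (1 + t)) ^ i := by
    intro i hi₁ hi
    have hxi : |x| ^ (m₁ - i) ≤ 1 + t := pow_le_one_add_pow (abs_nonneg x) (by omega)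
    calc |iteratedDeriv i φ x| ≤ B * (1 + |x| ^ (m₁ - i)) := hder i (hi.trans hjn) x
      _ ≤ (1 + 2 * B) * (1 + t) := by nlinarith
      _ ≤ ((1 + 2 * B) * (1 + t)) ^ i := le_self_pow₀ (by nlinarith) (by omega)
  have hjn' : (j : WithTop ℕ∞) ≤ n := by exact_mod_cast hjn
  have hpow : (1 + t) ^ j ≤ 2 ^ j * (1 + t ^ j) := by
    calc (1 + t) ^ j ≤ 2 ^ (j - 1) * (1 ^ j + t ^ j) := add_pow_le zero_le_one ht j
      _ ≤ 2 ^ j * (1 + t ^ j) := by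
        rw [one_pow]; gcongr; exacts [one_le_two, Nat.sub_le j 1]
  calc |iteratedDeriv j (g ∘ φ) x|
      ≤ j.factorial * c * ((1 + 2 * B) * (1 + t)) ^ j :=
        abs_iteratedDeriv_comp_le (hg.of_le hjn') (hφ.of_le hjn') hj x hc0 hc hD
    _ ≤ n.factorial * c * ((1 + 2 * B) ^ j * (2 ^ j * (1 + t ^ j))) := by
        rw [mul_pow]
        gcongr
    _ = n.factorial * c * ((2 * (1 + 2 * B)) ^ j * (1 + t ^ j)) := by rw [mul_pow]; ring
    _ ≤ n.factorial * c * ((2 * (1 + 2 * B)) ^ n * (1 + t ^ j)) := by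
        gcongr
        linarith
    _ = n.factorial * (2 * (1 + 2 * B)) ^ n * c * (1 + |x| ^ (j * (m₁ - 1))) := by
        rw [← pow_mul, mul_comm (m₁ - 1)]; ring

theorem exists_one_add_abs_pow_le_mul {φ : ℝ → ℝ} {A R m₀ a : ℝ} {q N : ℕ} (hA : 0 < A)
    (ha : 0 < a) (hq : Even q) (hgrow : ∀ x : ℝ, R ≤ |x| → A * |x| ^ m₀ ≤ φ x)
    (hN : (N : ℝ) ≤ m₀ * q) :
    ∃ C, ∀ x, 1 + |x| ^ N ≤ C * (1 + a * φ x ^ q) := by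
  set R' := max R 1
  refine ⟨1 + R' ^ N + 1 / (a * A ^ q), fun x => ?_⟩
  have hu : 0 ≤ a * φ x ^ q := mul_nonneg ha.le (hq.pow_nonneg _)
  have hK : 0 ≤ 1 / (a * A ^ q) := by positivity
  rcases le_total |x| R' with hx | hx
  · have : |x| ^ N ≤ R' ^ N := pow_le_pow_left₀ (abs_nonneg x) hx N
    nlinarith [pow_nonneg (abs_nonneg x) N]
  · have hx₁ : 1 ≤ |x| := (le_max_right R 1).trans hx
    have hgrowq : A ^ q * |x| ^ N ≤ φ x ^ q := by
      calc A ^ q * |x| ^ N ≤ A ^ q * (|x| ^ m₀) ^ q := by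
            gcongr
            rw [← Real.rpow_natCast, ← Real.rpow_natCast, ← Real.rpow_mul (abs_nonneg x)]
            exact Real.rpow_le_rpow_of_exponent_le hx₁ hN
        _ = (A * |x| ^ m₀) ^ q := (mul_pow _ _ _).symm
        _ ≤ φ x ^ q := pow_le_pow_left₀ (by positivity) (hgrow x ((le_max_left R 1).trans hx)) q
    have : |x| ^ N ≤ 1 / (a * A ^ q) * (a * φ x ^ q) := by
      rw [one_div_mul_eq_div, mul_comm a, ← div_div, mul_div_cancel_right₀ _ ha.ne',
        le_div_iff₀ (by positivity), mul_comm]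
      exact hgrowq
    nlinarith [pow_nonneg (abs_nonneg x) N, pow_nonneg (le_max_right R 1 |>.trans' zero_le_one) N]

lemma le_mul_two_mul_ceil_div_add_one {m₀ : ℝ} (hm₀ : 0 < m₀) (x : ℝ) :
    x ≤ m₀ * (2 * (⌈x / m₀⌉₊ + 1) : ℕ) := by
  calc x ≤ m₀ * ⌈x / m₀⌉₊ := by rw [← div_le_iff₀' hm₀]; exact Nat.le_ceil _
    _ ≤ m₀ * (2 * (⌈x / m₀⌉₊ + 1) : ℕ) := by gcongr; omega

open Filter

theorem stmt2_general (φ : ℝ → ℝ) (hφ : ContDiff ℝ 4 φ)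
    (A B R m₀ : ℝ) (hA : 0 < A) (hB : 0 < B) (hm₀ : 0 < m₀)
    (m₁ : ℕ)
    (hgrow : ∀ x : ℝ, R ≤ |x| → A * |x| ^ m₀ ≤ φ x)
    (hder : ∀ j : ℕ, j ≤ 4 → ∀ x : ℝ,
      |iteratedDeriv j φ x| ≤ B * (1 + |x| ^ (m₁ - j)))
    (α : ℕ → ℝ) (hα : ∀ m, 0 < α m) (hαmono : Antitone α) :
    ∃ q : ℕ, Even q ∧ 0 < q ∧
      (∀ m : ℕ, ∀ j : ℕ, 1 ≤ j → j ≤ 4 → ∃ C : ℝ, ∀ x : ℝ,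
        |iteratedDeriv j (fun t => φ t / (1 + α m * φ t ^ q)) x| ≤ C) ∧
      ∃ Btil : ℝ, 0 < Btil ∧ ∀ m : ℕ, ∀ j : ℕ, 1 ≤ j → j ≤ 4 → ∀ x : ℝ,
        |iteratedDeriv j (fun t => φ t / (1 + α m * φ t ^ q)) x|
          ≤ Btil * (1 + |x| ^ (j * (m₁ - 1))) := by
  set q := 2 * (⌈4 * m₁ / m₀⌉₊ + 1)
  have hq : Even q := even_two_mul _
  have hexp (j : ℕ) (hj : j ≤ 4) : ((j * (m₁ - 1) : ℕ) : ℝ) ≤ m₀ * q :=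
    le_trans (by exact_mod_cast Nat.mul_le_mul hj (Nat.sub_le m₁ 1))
      (le_mul_two_mul_ceil_div_add_one hm₀ _)
  have hw (m : ℕ) (x : ℝ) : 0 < 1 + α m * φ x ^ q := one_add_mul_pow_pos hq (hα m).le (φ x)
  obtain ⟨M, hM0, hM⟩ := exists_abs_iteratedDeriv_psi_le hq (by positivity) 4
  set K := (4).factorial * (2 * (1 + 2 * B)) ^ 4 * M
  have hbound (m j : ℕ) (hj : 1 ≤ j) (hj4 : j ≤ 4) (x : ℝ) :
      |iteratedDeriv j (psi (α m) q ∘ φ) x| ≤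
        K * ((1 + α m) ^ 4 / (1 + α m * φ x ^ q)) * (1 + |x| ^ (j * (m₁ - 1))) := by
    convert abs_iteratedDeriv_comp_le_of_abs_iteratedDeriv_le (contDiff_psi hq (hα m).le) hφ
      hB.le hder hj hj4 x (div_nonneg (by positivity) (hw m x).le)
      fun i hi hij => hM _ (hα m) i hi (hij.trans hj4) _ using 1
    ring
  refine ⟨q, hq, by positivity, fun m j hj hj4 => ?_,
    K * (1 + α 0) ^ 4, by have := hα 0; positivity, fun m j hj hj4 x => ?_⟩
  · obtain ⟨C, hC⟩ := exists_one_add_abs_pow_le_mul hA (hα m) hq hgrow (hexp j hj4)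
    refine ⟨K * (1 + α m) ^ 4 * C, fun x => (hbound m j hj hj4 x).trans ?_⟩
    calc _ ≤ K * ((1 + α m) ^ 4 / (1 + α m * φ x ^ q)) * (C * (1 + α m * φ x ^ q)) := by
          gcongr
          · exact mul_nonneg (by positivity) (div_nonneg (by positivity) (hw m x).le)
          · exact hC x
      _ = K * (1 + α m) ^ 4 * C := by field_simp [(hw m x).ne']
  · refine (hbound m j hj hj4 x).trans ?_
    gcongr
    calc (1 + α m) ^ 4 / (1 + α m * φ x ^ q) ≤ (1 + α m) ^ 4 :=
          div_le_self (by positivity) (by linarith [mul_nonneg (hα m).le (hq.pow_nonneg (φ x))])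
      _ ≤ (1 + α 0) ^ 4 := by gcongr; exacts [by linarith [hα m], hαmono (Nat.zero_le m)]

/-- For `φ` as in the context (C⁴, nonnegative, with growth
`φ(x) ≥ A|x|^{m₀}` for `|x| ≥ R` and derivative bounds
`|φ^{(j)}(x)| ≤ B(1+|x|^{m₁−j})`, `j = 0,…,4`), and a positive sequence
`(α_m)` decreasing to `0`, there exists an even positive integer `q`
(depending only on `φ`) such that for `φ_m = Ψ_m ∘ φ` with
`Ψ_m(x) = x/(1+α_m x^q)`:
(a) all derivatives of `φ_m` of orders `1,…,4` are bounded on `ℝ`, and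
(b) there is `B̃ ∈ (0,∞)`, independent of `m`, with
`|φ_m^{(j)}(x)| ≤ B̃(1+|x|^{j(m₁−1)})` for all `x`, `m` and `j ∈ {1,2,3,4}`. -/
theorem stmt2 (φ : ℝ → ℝ) (hφ : ContDiff ℝ 4 φ) (hφ0 : ∀ x : ℝ, 0 ≤ φ x)
    (A B R m₀ : ℝ) (hA : 0 < A) (hB : 0 < B) (hR : 0 < R) (hm₀ : 0 < m₀)
    (m₁ : ℕ) (hm₁ : 4 ≤ m₁)
    (hgrow : ∀ x : ℝ, R ≤ |x| → A * |x| ^ m₀ ≤ φ x)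
    (hder : ∀ j : ℕ, j ≤ 4 → ∀ x : ℝ,
      |iteratedDeriv j φ x| ≤ B * (1 + |x| ^ (m₁ - j)))
    (α : ℕ → ℝ) (hα : ∀ m, 0 < α m) (hαmono : Antitone α)
    (hα0 : Tendsto α atTop (nhds 0)) :
    ∃ q : ℕ, Even q ∧ 0 < q ∧
      (∀ m : ℕ, ∀ j : ℕ, 1 ≤ j → j ≤ 4 → ∃ C : ℝ, ∀ x : ℝ,
        |iteratedDeriv j (fun t => φ t / (1 + α m * φ t ^ q)) x| ≤ C) ∧
      ∃ Btil : ℝ, 0 < Btil ∧ ∀ m : ℕ, ∀ j : ℕ, 1 ≤ j → j ≤ 4 → ∀ x : ℝ,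
        |iteratedDeriv j (fun t => φ t / (1 + α m * φ t ^ q)) x|
          ≤ Btil * (1 + |x| ^ (j * (m₁ - 1))) :=
  stmt2_general φ hφ A B R m₀ hA hB hm₀ m₁ hgrow hder α hα hαmono
end

section
/- Let φ : ℝ → ℝ be twice continuously differentiable such that |φ''(x)| ≤ a(1+|x|^{b}) for all x ∈ ℝ, for some constants a ∈ (0,∞), b ∈ [0,∞). Then for every p ∈ [1,∞), lim_{n→∞} ∫_U ( ∫₀¹ |φ'((P_n x)(ξ)) − φ'(x(ξ))|² dξ )^{p/2} dμ(x) = 0; that is, the maps x ↦ φ'∘(P_n x) converge to x ↦ φ'∘x in L^p(μ; L²((0,1))). -/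
/-!
By the mean value theorem and the growth bound on `φ''`,
`|φ'(s) - φ'(t)| ≤ a (1 + |s|^b + |t|^b) |s - t|`, so Young's inequality gives, for every `δ > 0`,
`|φ'(s) - φ'(t)|^{2m} ≤ δ (1 + |s|^r + |t|^r) + C_δ |s - t|^{4m}` with `r` independent of `δ`.
With `q = p/2` and `m = q + 1`, Jensen's inequality on `(0,1)` and `B^q ≤ η^q + η⁻¹ B^{q+1}` turn
this into `(∫₀¹ |φ'(P_n x) - φ'(x)|²)^q ≤ δ (1 + ∫₀¹ |P_n x|^r + |x|^r) + C_δ ∫₀¹ |P_n x - x|^{4m}`.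
Integrating in `μ`, the moments are bounded uniformly in `n` and the last term tends to `0`, so the
`limsup` is at most a multiple of `δ`.

Adding the two `μ`-integrals requires one of the integrands to be measurable in `x`; for
`x ↦ ∫₀¹ |P_n x - x|^{4m}` this follows since `y ↦ ∫₀¹ |y|^r` is a supremum of continuous functions
on `L²`, namely the integrals of the truncations `min |y| j ^ r`.
-/

open MeasureTheory Set Filter

/-- Lebesgue measure restricted to `(0,1)`. -/
noncomputable def leb01 : Measure ℝ := volume.restrict (Set.Ioo (0:ℝ) 1)

open scoped ENNReal NNReal Topology

instance isProbabilityMeasure_leb01 : IsProbabilityMeasure leb01 :=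
  ⟨by rw [leb01, Measure.restrict_apply_univ, Real.volume_Ioo]; norm_num⟩

theorem mul_le_mul_sq_add_inv_mul_sq {c : ℝ} (hc : 0 < c) (x y : ℝ) :
    x * y ≤ c * x ^ 2 + c⁻¹ * y ^ 2 := by
  have h : c⁻¹ * (c * x - y) ^ 2 = c * x ^ 2 - 2 * (x * y) + c⁻¹ * y ^ 2 := by
    field_simp; ring
  have h1 : 0 ≤ c⁻¹ * (c * x - y) ^ 2 := by positivity
  have h2 : 0 ≤ c * x ^ 2 + c⁻¹ * y ^ 2 := by positivity
  rcases le_total (x * y) 0 with hxy | hxy <;> linarith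

theorem sq_rpow_eq_rpow_two_mul {x : ℝ} (hx : 0 ≤ x) (σ : ℝ) : (x ^ σ) ^ 2 = x ^ (2 * σ) := by
  rw [← Real.rpow_natCast, ← Real.rpow_mul hx]; ring_nf

theorem rpow_abs_le_add_of_mem_uIcc {b s t θ : ℝ} (hb : 0 ≤ b) (hθ : θ ∈ uIcc s t) :
    |θ| ^ b ≤ |s| ^ b + |t| ^ b := by
  have : |θ| ≤ |s| ∨ |θ| ≤ |t| := by
    rcases le_total s t with h | h
    · rw [uIcc_of_le h] at hθ
      exact le_max_iff.mp (abs_le_max_abs_abs hθ.1 hθ.2)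
    · rw [uIcc_of_ge h] at hθ
      exact (le_max_iff.mp (abs_le_max_abs_abs hθ.1 hθ.2)).symm
  have hs := Real.rpow_nonneg (abs_nonneg s) b
  have ht := Real.rpow_nonneg (abs_nonneg t) b
  rcases this with h | h
  · linarith [Real.rpow_le_rpow (abs_nonneg θ) h hb]
  · linarith [Real.rpow_le_rpow (abs_nonneg θ) h hb]

theorem abs_sub_le_of_abs_deriv_le {f : ℝ → ℝ} (hf : Differentiable ℝ f) {a b : ℝ}
    (ha : 0 ≤ a) (hb : 0 ≤ b) (hgrow : ∀ x, |deriv f x| ≤ a * (1 + |x| ^ b)) (s t : ℝ) :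
    |f s - f t| ≤ a * (1 + |s| ^ b + |t| ^ b) * |s - t| := by
  have bound : ∀ θ ∈ uIcc t s, ‖deriv f θ‖ ≤ a * (1 + |s| ^ b + |t| ^ b) := fun θ hθ =>
    calc |deriv f θ| ≤ a * (1 + |θ| ^ b) := hgrow θ
      _ ≤ a * (1 + |s| ^ b + |t| ^ b) := by
        have := rpow_abs_le_add_of_mem_uIcc hb (uIcc_comm t s ▸ hθ)
        exact mul_le_mul_of_nonneg_left (by linarith) ha
  simpa using convex_uIcc t s |>.norm_image_sub_le_of_norm_deriv_le (fun θ _ => hf θ) bound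
    left_mem_uIcc right_mem_uIcc

theorem max_one_max_abs_rpow_le (r s t : ℝ) :
    max 1 (max |s| |t|) ^ r ≤ 1 + |s| ^ r + |t| ^ r := by
  have hs := Real.rpow_nonneg (abs_nonneg s) r
  have ht := Real.rpow_nonneg (abs_nonneg t) r
  rcases max_cases 1 (max |s| |t|) with ⟨h, -⟩ | ⟨h, -⟩ <;> rw [h]
  · linarith [(Real.one_rpow r).le]
  · rcases max_cases |s| |t| with ⟨h', -⟩ | ⟨h', -⟩ <;> rw [h'] <;> linarith

theorem mul_one_add_abs_rpow_rpow_le {a b σ r : ℝ} (ha : 0 ≤ a) (hb : 0 ≤ b) (hσ : 0 ≤ σ)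
    (hr : b * σ ≤ r) (s t : ℝ) :
    (a * (1 + |s| ^ b + |t| ^ b)) ^ σ ≤ (3 * a) ^ σ * (1 + |s| ^ r + |t| ^ r) := by
  set M := max 1 (max |s| |t|)
  have hM : 1 ≤ M := le_max_left _ _
  have hsM : |s| ≤ M := (le_max_left _ _).trans (le_max_right _ _)
  have htM : |t| ≤ M := (le_max_right _ _).trans (le_max_right _ _)
  have hsum : 1 + |s| ^ b + |t| ^ b ≤ 3 * M ^ b := by
    linarith [Real.one_le_rpow hM hb, Real.rpow_le_rpow (abs_nonneg s) hsM hb,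
      Real.rpow_le_rpow (abs_nonneg t) htM hb]
  calc (a * (1 + |s| ^ b + |t| ^ b)) ^ σ ≤ (3 * a * M ^ b) ^ σ := by
        refine Real.rpow_le_rpow (by positivity) ?_ hσ
        rw [mul_comm 3 a, mul_assoc]
        exact mul_le_mul_of_nonneg_left hsum ha
    _ = (3 * a) ^ σ * M ^ (b * σ) := by
        rw [Real.mul_rpow (by positivity) (by positivity), ← Real.rpow_mul (by positivity)]
    _ ≤ (3 * a) ^ σ * M ^ r := by gcongr
    _ ≤ (3 * a) ^ σ * (1 + |s| ^ r + |t| ^ r) := by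
        gcongr; exact max_one_max_abs_rpow_le r s t

theorem exists_rpow_abs_sub_le {f : ℝ → ℝ} {a b σ r : ℝ} (ha : 0 ≤ a) (hb : 0 ≤ b)
    (hσ : 0 ≤ σ) (hr : b * (2 * σ) ≤ r)
    (hf : ∀ s t, |f s - f t| ≤ a * (1 + |s| ^ b + |t| ^ b) * |s - t|) (δ : ℝ≥0) (hδ : 0 < δ) :
    ∃ C : ℝ≥0, ∀ s t,
      |f s - f t| ^ σ ≤ δ * (1 + |s| ^ r + |t| ^ r) + C * |s - t| ^ (2 * σ) := by
  set K := (3 * a) ^ (2 * σ)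
  have hK : 0 ≤ K := by positivity
  set c : ℝ := δ / (K + 1)
  have hc : 0 < c := div_pos hδ (by linarith)
  have hcK : c * K ≤ δ := by
    rw [div_mul_eq_mul_div, div_le_iff₀ (by linarith)]
    nlinarith [δ.coe_nonneg]
  refine ⟨c⁻¹.toNNReal, fun s t => ?_⟩
  set w := a * (1 + |s| ^ b + |t| ^ b)
  have hw : 0 ≤ w := by positivity
  have he := abs_nonneg (s - t)
  have hgrowth := mul_one_add_abs_rpow_rpow_le ha hb (by positivity) hr s t
  rw [Real.coe_toNNReal _ (inv_pos.mpr hc).le]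
  calc |f s - f t| ^ σ ≤ (w * |s - t|) ^ σ := Real.rpow_le_rpow (abs_nonneg _) (hf s t) hσ
    _ = w ^ σ * |s - t| ^ σ := Real.mul_rpow hw he
    _ ≤ c * (w ^ σ) ^ 2 + c⁻¹ * (|s - t| ^ σ) ^ 2 := mul_le_mul_sq_add_inv_mul_sq hc _ _
    _ = c * w ^ (2 * σ) + c⁻¹ * |s - t| ^ (2 * σ) := by
        rw [sq_rpow_eq_rpow_two_mul hw, sq_rpow_eq_rpow_two_mul he]
    _ ≤ c * (K * (1 + |s| ^ r + |t| ^ r)) + c⁻¹ * |s - t| ^ (2 * σ) := by gcongr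
    _ ≤ δ * (1 + |s| ^ r + |t| ^ r) + c⁻¹ * |s - t| ^ (2 * σ) := by
        rw [← mul_assoc]
        gcongr

theorem ENNReal.rpow_le_add_inv_mul_rpow_add_one (B : ℝ≥0∞) {η : ℝ≥0∞} (hη0 : η ≠ 0)
    (hηt : η ≠ ∞) {q : ℝ} (hq : 0 ≤ q) : B ^ q ≤ η ^ q + η⁻¹ * B ^ (q + 1) := by
  rcases le_total B η with h | h
  · exact le_add_right (ENNReal.rpow_le_rpow h hq)
  · rcases eq_or_ne B ∞ with rfl | hBt
    · simp [ENNReal.top_rpow_of_pos (by linarith : 0 < q + 1), hηt]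
    have hB0 : B ≠ 0 := ne_bot_of_le_ne_bot hη0 h
    calc B ^ q = η⁻¹ * (η * B ^ q) := by
          rw [← mul_assoc, ENNReal.inv_mul_cancel hη0 hηt, one_mul]
      _ ≤ η⁻¹ * (B * B ^ q) := by gcongr
      _ = η⁻¹ * B ^ (q + 1) := by rw [ENNReal.rpow_add _ _ hB0 hBt, ENNReal.rpow_one, mul_comm B]
      _ ≤ η ^ q + η⁻¹ * B ^ (q + 1) := le_add_self

theorem exists_rpow_le_of_rpow_add_one_le {q : ℝ} (hq : 0 < q) (δ : ℝ≥0) (hδ : 0 < δ) :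
    ∃ δ' : ℝ≥0, 0 < δ' ∧ ∃ K : ℝ≥0, ∀ {B H G : ℝ≥0∞} {C : ℝ≥0},
      B ^ (q + 1) ≤ δ' * (1 + H) + C * G → B ^ q ≤ δ * (1 + H) + ↑(K * C) * G := by
  set η : ℝ≥0 := (δ / 2) ^ q⁻¹
  have hη : 0 < η := NNReal.rpow_pos (half_pos hδ)
  have hηq : (η : ℝ≥0∞) ^ q = ↑(δ / 2) := by
    rw [← ENNReal.coe_rpow_of_nonneg _ hq.le, ← NNReal.rpow_mul, inv_mul_cancel₀ hq.ne',
      NNReal.rpow_one]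
  have hcancel : (η : ℝ≥0∞)⁻¹ * ↑(η * (δ / 2)) = ↑(δ / 2) := by
    rw [← ENNReal.coe_inv hη.ne', ← ENNReal.coe_mul, inv_mul_cancel_left₀ hη.ne']
  refine ⟨η * (δ / 2), mul_pos hη (half_pos hδ), η⁻¹, fun {B H G C} h => ?_⟩
  calc B ^ q ≤ (η : ℝ≥0∞) ^ q + (η : ℝ≥0∞)⁻¹ * B ^ (q + 1) :=
        ENNReal.rpow_le_add_inv_mul_rpow_add_one _ (by simpa using hη.ne') ENNReal.coe_ne_top
          hq.le
    _ ≤ ↑(δ / 2) + (η : ℝ≥0∞)⁻¹ * (↑(η * (δ / 2)) * (1 + H) + C * G) := by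
        rw [hηq]; gcongr
    _ ≤ ↑(δ / 2) * (1 + H) + ↑(δ / 2) * (1 + H) + ↑(η⁻¹ * C) * G := by
        rw [mul_add, ← mul_assoc, hcancel, ← mul_assoc, ENNReal.coe_mul,
          ENNReal.coe_inv hη.ne', ← add_assoc]
        gcongr
        exact le_mul_of_one_le_right' le_self_add
    _ = δ * (1 + H) + ↑(η⁻¹ * C) * G := by
        rw [← add_mul, ← ENNReal.coe_add, add_halves]

section Integrals

variable {α : Type*} [MeasurableSpace α] {ν : Measure α} [IsProbabilityMeasure ν]

theorem rpow_lintegral_le_lintegral_rpow {f : α → ℝ≥0∞} (hf : AEMeasurable f ν) {m : ℝ}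
    (hm : 1 ≤ m) : (∫⁻ ξ, f ξ ∂ν) ^ m ≤ ∫⁻ ξ, f ξ ^ m ∂ν := by
  have h := eLpNorm'_le_eLpNorm'_of_exponent_le one_pos hm ν hf.aestronglyMeasurable
  simp only [eLpNorm', enorm_eq_self, ENNReal.rpow_one, div_one] at h
  calc (∫⁻ ξ, f ξ ∂ν) ^ m ≤ ((∫⁻ ξ, f ξ ^ m ∂ν) ^ (1 / m)) ^ m := by gcongr
    _ = ∫⁻ ξ, f ξ ^ m ∂ν := by
        rw [← ENNReal.rpow_mul, one_div_mul_cancel (by positivity), ENNReal.rpow_one]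

theorem lintegral_ofReal_le_of_le {f g h : α → ℝ} (hg : AEMeasurable g ν) (hg0 : ∀ ξ, 0 ≤ g ξ)
    (hh0 : ∀ ξ, 0 ≤ h ξ) {δ C : ℝ≥0} (hfgh : ∀ ξ, f ξ ≤ δ * (1 + g ξ) + C * h ξ) :
    ∫⁻ ξ, ENNReal.ofReal (f ξ) ∂ν ≤
      δ * (1 + ∫⁻ ξ, ENNReal.ofReal (g ξ) ∂ν) + C * ∫⁻ ξ, ENNReal.ofReal (h ξ) ∂ν := by
  have hpt : ∀ ξ, ENNReal.ofReal (f ξ) ≤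
      δ * (1 + ENNReal.ofReal (g ξ)) + C * ENNReal.ofReal (h ξ) := fun ξ => by
    refine (ENNReal.ofReal_le_ofReal (hfgh ξ)).trans_eq ?_
    rw [ENNReal.ofReal_add (by have := hg0 ξ; positivity) (by have := hh0 ξ; positivity),
      ENNReal.ofReal_mul δ.coe_nonneg, ENNReal.ofReal_mul C.coe_nonneg,
      ENNReal.ofReal_add zero_le_one (hg0 ξ)]
    simp
  calc ∫⁻ ξ, ENNReal.ofReal (f ξ) ∂ν
      ≤ ∫⁻ ξ, (δ * (1 + ENNReal.ofReal (g ξ)) + C * ENNReal.ofReal (h ξ)) ∂ν := lintegral_mono hpt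
    _ = _ := by
        rw [lintegral_add_left' ((hg.ennreal_ofReal.const_add 1).const_mul (δ : ℝ≥0∞)),
          lintegral_const_mul' _ _ ENNReal.coe_ne_top, lintegral_const_mul' _ _ ENNReal.coe_ne_top,
          lintegral_add_left measurable_const, lintegral_const, measure_univ, one_mul]

theorem exists_rpow_lintegral_sq_abs_sub_le {f : ℝ → ℝ} (hfm : Measurable f) {a b q r : ℝ}
    (ha : 0 ≤ a) (hb : 0 ≤ b) (hq : 0 < q) (hr : b * (4 * (q + 1)) ≤ r)
    (hf : ∀ s t, |f s - f t| ≤ a * (1 + |s| ^ b + |t| ^ b) * |s - t|) (δ : ℝ≥0) (hδ : 0 < δ) :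
    ∃ C : ℝ≥0, ∀ u v : α → ℝ, AEMeasurable u ν → AEMeasurable v ν →
      (∫⁻ ξ, ENNReal.ofReal (|f (u ξ) - f (v ξ)| ^ (2 : ℕ)) ∂ν) ^ q ≤
        δ * (1 + ∫⁻ ξ, ENNReal.ofReal (|u ξ| ^ r + |v ξ| ^ r) ∂ν) +
          C * ∫⁻ ξ, ENNReal.ofReal (|u ξ - v ξ| ^ (4 * (q + 1))) ∂ν := by
  obtain ⟨δ', hδ', K, hK⟩ := exists_rpow_le_of_rpow_add_one_le hq δ hδ
  obtain ⟨C, hC⟩ := exists_rpow_abs_sub_le ha hb (σ := 2 * (q + 1)) (by positivity)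
    (by linarith) hf δ' hδ'
  refine ⟨K * C, fun u v hu hv => hK ?_⟩
  have hfu := hfm.comp_aemeasurable hu
  have hfv := hfm.comp_aemeasurable hv
  calc (∫⁻ ξ, ENNReal.ofReal (|f (u ξ) - f (v ξ)| ^ (2 : ℕ)) ∂ν) ^ (q + 1)
      ≤ ∫⁻ ξ, ENNReal.ofReal (|f (u ξ) - f (v ξ)| ^ (2 : ℕ)) ^ (q + 1) ∂ν :=
        rpow_lintegral_le_lintegral_rpow (by fun_prop) (by linarith)
    _ = ∫⁻ ξ, ENNReal.ofReal (|f (u ξ) - f (v ξ)| ^ (2 * (q + 1))) ∂ν := by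
        refine lintegral_congr fun ξ => ?_
        rw [ENNReal.ofReal_rpow_of_nonneg (by positivity) (by linarith), ← Real.rpow_natCast,
          ← Real.rpow_mul (abs_nonneg _), Nat.cast_ofNat]
    _ ≤ _ := by
        refine lintegral_ofReal_le_of_le (by fun_prop) (fun ξ => by positivity)
          (fun ξ => by positivity) fun ξ => ?_
        rw [show 4 * (q + 1) = 2 * (2 * (q + 1)) by ring, ← add_assoc]
        exact hC (u ξ) (v ξ)

end Integrals

section Measurability

theorem exists_lipschitzWith_min_abs_rpow {r : ℝ} (hr : 1 ≤ r) {j : ℝ} (hj : 0 ≤ j) :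
    ∃ K, LipschitzWith K fun t : ℝ => min |t| j ^ r := by
  have hpow : ContDiff ℝ 1 fun u : ℝ => u ^ r :=
    Real.contDiff_rpow_const_of_le (by exact_mod_cast hr)
  obtain ⟨K, hK⟩ := (hpow.locallyLipschitz.locallyLipschitzOn (s := Icc 0 j))
    |>.exists_lipschitzOnWith_of_compact isCompact_Icc
  have hmin : LipschitzWith 1 fun t : ℝ => min |t| j := lipschitzWith_one_norm.min_const j
  have hmaps : MapsTo (fun t : ℝ => min |t| j) univ (Icc 0 j) :=
    fun t _ => ⟨le_min (abs_nonneg t) hj, min_le_right _ _⟩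
  exact ⟨K * 1, lipschitzOnWith_univ.mp (hK.comp hmin.lipschitzOnWith hmaps)⟩

variable {α : Type*} [MeasurableSpace α] {ν : Measure α} [IsFiniteMeasure ν]

theorem continuous_lintegral_ofReal_comp {g : ℝ → ℝ} {K : ℝ≥0} (hg : LipschitzWith K g)
    (hg0 : g 0 = 0) (hg_nonneg : ∀ t, 0 ≤ g t) :
    Continuous fun y : Lp ℝ 2 ν => ∫⁻ ξ, ENNReal.ofReal (g (y ξ)) ∂ν := by
  have hint : ∀ y : Lp ℝ 2 ν, ∫⁻ ξ, ENNReal.ofReal (g (y ξ)) ∂ν = ENNReal.ofReal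
      (inner ℝ (indicatorConstLp 2 MeasurableSet.univ (measure_ne_top ν univ) (1 : ℝ))
        (hg.compLp hg0 y)) := by
    intro y
    have hcomp := hg.coeFn_compLp hg0 y
    rw [L2.inner_indicatorConstLp_one, Measure.restrict_univ,
      ofReal_integral_eq_lintegral_ofReal ((Lp.memLp _).integrable one_le_two)
        (hcomp.mono fun ξ h => by simp [h, hg_nonneg])]
    exact lintegral_congr_ae (hcomp.mono fun ξ h => by simp [h])
  simp_rw [hint]
  exact ENNReal.continuous_ofReal.comp (continuous_const.inner (hg.continuous_compLp hg0))

variable [MeasurableSpace (Lp ℝ 2 ν)] [BorelSpace (Lp ℝ 2 ν)]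

theorem measurable_lintegral_ofReal_abs_rpow {r : ℝ} (hr : 1 ≤ r) :
    Measurable fun y : Lp ℝ 2 ν => ∫⁻ ξ, ENNReal.ofReal (|y ξ| ^ r) ∂ν := by
  have htrunc : ∀ j : ℕ, Measurable fun y : Lp ℝ 2 ν =>
      ∫⁻ ξ, ENNReal.ofReal (min |y ξ| j ^ r) ∂ν := by
    intro j
    obtain ⟨K, hK⟩ := exists_lipschitzWith_min_abs_rpow hr j.cast_nonneg
    refine (continuous_lintegral_ofReal_comp hK ?_ fun t => ?_).measurable
    · simp [Real.zero_rpow (zero_lt_one.trans_le hr).ne']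
    · exact Real.rpow_nonneg (le_min (abs_nonneg t) j.cast_nonneg) r
  refine measurable_of_tendsto_metrizable htrunc (tendsto_pi_nhds.mpr fun y => ?_)
  have hy := (Lp.aestronglyMeasurable y).aemeasurable
  refine lintegral_tendsto_of_tendsto_of_monotone (fun j => by fun_prop)
    (ae_of_all _ fun ξ i j hij => ?_) (ae_of_all _ fun ξ => ?_)
  · exact ENNReal.ofReal_le_ofReal (Real.rpow_le_rpow (le_min (abs_nonneg _) i.cast_nonneg)
      (min_le_min_left _ (Nat.cast_le.mpr hij)) (zero_le_one.trans hr))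
  · obtain ⟨j, hj⟩ := exists_nat_ge |y ξ|
    refine tendsto_atTop_of_eventually_const (i₀ := j) fun i hi => ?_
    rw [min_eq_left (hj.trans (Nat.cast_le.mpr hi))]

theorem measurable_lintegral_ofReal_abs_sub_rpow {T : Lp ℝ 2 ν → Lp ℝ 2 ν} (hT : Continuous T)
    {r : ℝ} (hr : 1 ≤ r) :
    Measurable fun y : Lp ℝ 2 ν => ∫⁻ ξ, ENNReal.ofReal (|T y ξ - y ξ| ^ r) ∂ν := by
  convert (measurable_lintegral_ofReal_abs_rpow hr).comp (hT.sub continuous_id').measurable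
    using 1
  funext y
  refine lintegral_congr_ae ?_
  filter_upwards [Lp.coeFn_sub (T y) y] with ξ h
  simp only [h, Pi.sub_apply]

end Measurability

theorem tendsto_lintegral_of_forall_exists_le {X : Type*} [MeasurableSpace X] {μ : Measure X}
    [IsFiniteMeasure μ] {F G H : ℕ → X → ℝ≥0∞} (hG : ∀ n, Measurable (G n))
    (hG0 : Tendsto (fun n => ∫⁻ x, G n x ∂μ) atTop (𝓝 0))
    (hH : ⨆ n, ∫⁻ x, H n x ∂μ ≠ ∞)
    (hF : ∀ δ : ℝ≥0, 0 < δ → ∃ C : ℝ≥0, ∀ n x, F n x ≤ δ * (1 + H n x) + C * G n x) :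
    Tendsto (fun n => ∫⁻ x, F n x ∂μ) atTop (𝓝 0) := by
  set M := μ univ + ⨆ n, ∫⁻ x, H n x ∂μ
  have hM : M ≠ ∞ := ENNReal.add_ne_top.mpr ⟨measure_ne_top μ univ, hH⟩
  refine ENNReal.tendsto_nhds_zero.mpr fun ε hε => ?_
  obtain ⟨δ, hδ, hδM⟩ := ENNReal.exists_nnreal_pos_mul_lt hM (ENNReal.half_pos hε.ne').ne'
  obtain ⟨C, hC⟩ := hF δ hδ
  have hCG : Tendsto (fun n => (C : ℝ≥0∞) * ∫⁻ x, G n x ∂μ) atTop (𝓝 0) := by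
    simpa using ENNReal.Tendsto.const_mul hG0 (Or.inr ENNReal.coe_ne_top)
  filter_upwards [ENNReal.tendsto_nhds_zero.mp hCG (ε / 2) (ENNReal.half_pos hε.ne')] with n hn
  calc ∫⁻ x, F n x ∂μ ≤ ∫⁻ x, (δ * (1 + H n x) + C * G n x) ∂μ := lintegral_mono (hC n)
    _ = δ * (μ univ + ∫⁻ x, H n x ∂μ) + C * ∫⁻ x, G n x ∂μ := by
        rw [lintegral_add_right _ ((hG n).const_mul _),
          lintegral_const_mul' _ _ ENNReal.coe_ne_top, lintegral_add_left measurable_const,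
          lintegral_const_mul _ (hG n), lintegral_const, one_mul]
    _ ≤ δ * M + ε / 2 := by
        gcongr
        exact add_le_add_right (le_iSup (fun n => ∫⁻ x, H n x ∂μ) n) _
    _ ≤ ε / 2 + ε / 2 := by gcongr
    _ = ε := ENNReal.add_halves ε

theorem stmt6_general
    (φ : ℝ → ℝ) (hφ : ContDiff ℝ 2 φ)
    (a b : ℝ) (ha : 0 < a) (hb : 0 ≤ b)
    (hgrow : ∀ x : ℝ, |deriv (deriv φ) x| ≤ a * (1 + |x| ^ b))
    (d : ℕ → Lp ℝ 2 leb01)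
    (P : ℕ → Lp ℝ 2 leb01 → Lp ℝ 2 leb01)
    (hP : ∀ n x, P n x = ∑ k ∈ Finset.range n, (inner ℝ x (d k) : ℝ) • d k)
    [MeasurableSpace (Lp ℝ 2 leb01)] [BorelSpace (Lp ℝ 2 leb01)]
    (μ : Measure (Lp ℝ 2 leb01)) [IsProbabilityMeasure μ]
    (hmom : ∀ r : ℝ, 1 ≤ r →
      (⨆ n : ℕ, ∫⁻ x, (∫⁻ ξ in Set.Ioo (0:ℝ) 1,
        ENNReal.ofReal (|(P n x) ξ| ^ r + |x ξ| ^ r)) ∂μ) < ⊤)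
    (hconv : ∀ r : ℝ, 1 ≤ r →
      Tendsto (fun n : ℕ => ∫⁻ x, (∫⁻ ξ in Set.Ioo (0:ℝ) 1,
        ENNReal.ofReal (|(P n x) ξ - x ξ| ^ r)) ∂μ) atTop (nhds 0))
    (p : ℝ) (hp : 1 ≤ p) :
    Tendsto (fun n : ℕ => ∫⁻ x, (∫⁻ ξ in Set.Ioo (0:ℝ) 1,
        ENNReal.ofReal (|deriv φ ((P n x) ξ) - deriv φ (x ξ)| ^ (2:ℕ))) ^ (p / 2) ∂μ)
      atTop (nhds 0) := by
  have hleb : volume.restrict (Ioo (0:ℝ) 1) = leb01 := rfl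
  simp only [hleb] at hmom hconv ⊢
  have hq : 0 < p / 2 := by linarith
  set r := max (b * (4 * (p / 2 + 1))) 1
  have hPc : ∀ n, Continuous (P n) := fun n => by
    rw [show P n = _ from funext (hP n)]
    fun_prop
  have hlip := abs_sub_le_of_abs_deriv_le hφ.differentiable_deriv_two ha.le hb hgrow
  refine tendsto_lintegral_of_forall_exists_le
    (fun n => measurable_lintegral_ofReal_abs_sub_rpow (hPc n) (by linarith))
    (hconv (4 * (p / 2 + 1)) (by linarith)) (hmom r (le_max_right _ _)).ne fun δ hδ => ?_
  obtain ⟨C, hC⟩ := exists_rpow_lintegral_sq_abs_sub_le (ν := leb01)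
    hφ.differentiable_deriv_two.continuous.measurable ha.le hb hq (le_max_left _ _) hlip δ hδ
  exact ⟨C, fun n x => hC _ _ (Lp.aestronglyMeasurable _).aemeasurable
    (Lp.aestronglyMeasurable _).aemeasurable⟩

/-- Let `φ : ℝ → ℝ` be twice continuously differentiable with
`|φ''(x)| ≤ a(1+|x|^b)`. With `U = L²((0,1))`, the sine basis `d_k`, the
projections `P_n` and a probability measure `μ` with the stated moment and
approximation properties, for every `p ∈ [1,∞)`:
`lim_{n→∞} ∫ (∫₀¹ |φ'((P_n x)(ξ)) − φ'(x(ξ))|² dξ)^{p/2} dμ(x) = 0`,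
i.e. `x ↦ φ'∘(P_n x)` converges to `x ↦ φ'∘x` in `L^p(μ; L²((0,1)))`. -/
theorem stmt6
    (φ : ℝ → ℝ) (hφ : ContDiff ℝ 2 φ)
    (a b : ℝ) (ha : 0 < a) (hb : 0 ≤ b)
    (hgrow : ∀ x : ℝ, |deriv (deriv φ) x| ≤ a * (1 + |x| ^ b))
    (d : ℕ → Lp ℝ 2 leb01)
    (hd : ∀ k : ℕ,
      ⇑(d k) =ᵐ[leb01] fun ξ => Real.sqrt 2 * Real.sin ((k+1) * Real.pi * ξ))
    (P : ℕ → Lp ℝ 2 leb01 → Lp ℝ 2 leb01)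
    (hP : ∀ n x, P n x = ∑ k ∈ Finset.range n, (inner ℝ x (d k) : ℝ) • d k)
    [MeasurableSpace (Lp ℝ 2 leb01)] [BorelSpace (Lp ℝ 2 leb01)]
    (μ : Measure (Lp ℝ 2 leb01)) [IsProbabilityMeasure μ]
    (hmom : ∀ r : ℝ, 1 ≤ r →
      (⨆ n : ℕ, ∫⁻ x, (∫⁻ ξ in Set.Ioo (0:ℝ) 1,
        ENNReal.ofReal (|(P n x) ξ| ^ r + |x ξ| ^ r)) ∂μ) < ⊤)
    (hconv : ∀ r : ℝ, 1 ≤ r →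
      Tendsto (fun n : ℕ => ∫⁻ x, (∫⁻ ξ in Set.Ioo (0:ℝ) 1,
        ENNReal.ofReal (|(P n x) ξ - x ξ| ^ r)) ∂μ) atTop (nhds 0))
    (p : ℝ) (hp : 1 ≤ p) :
    Tendsto (fun n : ℕ => ∫⁻ x, (∫⁻ ξ in Set.Ioo (0:ℝ) 1,
        ENNReal.ofReal (|deriv φ ((P n x) ξ) - deriv φ (x ξ)| ^ (2:ℕ))) ^ (p / 2) ∂μ)
      atTop (nhds 0) :=
  stmt6_general φ hφ a b ha hb hgrow d P hP μ hmom hconv p hp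
end

section
/- Let a₁ ∈ [0,∞), a₂ ∈ [0,∞), a₃ ∈ [0,2), let ψ : ℝ → [0,∞) be continuous with ψ(x) ≤ 1 + a₂|x|^{a₃} for all x ∈ ℝ, and set φ(x) = a₁x² + ψ(x). Then for every ε > 0 there exists a constant c ∈ (0,∞) such that for all u ∈ L²((0,1)) and all n ∈ ℕ: ∫₀¹ φ((P_n u)(ξ)) dξ ≤ ∫₀¹ φ(u(ξ)) dξ + c + ε‖u‖²_{L²((0,1))}, all integrals being finite. -/
open MeasureTheory Set Filter

open Real

/-! The projections `P n` are contractions, because the sine family is orthonormal in `L²(0,1)`.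
On the other hand `a₁x² ≤ φ(x) ≤ (a₁ + ε)x² + c` for every `x`, since `|x|^{a₃}` with `a₃ < 2`
is absorbed into `εx²` up to a constant. Hence
`∫ φ(P_n u) ≤ (a₁ + ε)‖P_n u‖² + c ≤ a₁‖u‖² + ε‖u‖² + c ≤ ∫ φ(u) + ε‖u‖² + c`. -/

theorem exists_mul_abs_rpow_le_add_mul_sq {a p ε : ℝ} (ha : 0 ≤ a) (hp0 : 0 ≤ p) (hp : p < 2)
    (hε : 0 < ε) : ∃ C : ℝ, 0 ≤ C ∧ ∀ x : ℝ, a * |x| ^ p ≤ C + ε * x ^ 2 := by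
  have hq : 0 < 2 - p := by linarith
  -- beyond `M` the factor `|x|^{2-p} ≥ a/ε` absorbs `a`
  set M : ℝ := max ((a / ε) ^ (2 - p)⁻¹) 1
  have hM0 : 0 < M := lt_max_of_lt_right one_pos
  have hC0 : 0 ≤ a * M ^ p := mul_nonneg ha (rpow_nonneg hM0.le _)
  refine ⟨a * M ^ p, hC0, fun x => ?_⟩
  rcases le_or_gt |x| M with hx | hx
  · have : a * |x| ^ p ≤ a * M ^ p := by gcongr
    linarith [mul_nonneg hε.le (sq_nonneg x)]
  · have hx0 : 0 < |x| := hM0.trans hx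
    have hcoef : a ≤ ε * |x| ^ (2 - p) := by
      have hM : a / ε ≤ M ^ (2 - p) := by
        calc a / ε = ((a / ε) ^ (2 - p)⁻¹) ^ (2 - p) := by
              rw [← rpow_mul (div_nonneg ha hε.le), inv_mul_cancel₀ hq.ne', rpow_one]
          _ ≤ M ^ (2 - p) := by gcongr; exact le_max_left _ _
      have : a / ε ≤ |x| ^ (2 - p) := hM.trans (by gcongr)
      rwa [div_le_iff₀ hε, mul_comm] at this
    calc a * |x| ^ p ≤ ε * |x| ^ (2 - p) * |x| ^ p := by gcongr
      _ = ε * x ^ 2 := by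
        rw [mul_assoc, ← rpow_add hx0, sub_add_cancel, rpow_two, sq_abs]
      _ ≤ a * M ^ p + ε * x ^ 2 := le_add_of_nonneg_left hC0

theorem integral_cos_int_mul_pi_mul (c : ℤ) :
    ∫ x in (0:ℝ)..1, cos (c * π * x) = if c = 0 then 1 else 0 := by
  rcases eq_or_ne c 0 with rfl | hc
  · simp
  · have hcπ : (c : ℝ) * π ≠ 0 := mul_ne_zero (Int.cast_ne_zero.2 hc) pi_ne_zero
    rw [if_neg hc, intervalIntegral.integral_comp_mul_left cos hcπ]
    simp [integral_cos, sin_int_mul_pi]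

theorem integral_sin_mul_sin (m n : ℕ) :
    ∫ x in (0:ℝ)..1, sin ((m + 1) * π * x) * sin ((n + 1) * π * x)
      = if m = n then 1 / 2 else 0 := by
  have hprod : ∀ x : ℝ, sin ((m + 1) * π * x) * sin ((n + 1) * π * x)
      = (cos (((m - n : ℤ) : ℝ) * π * x) - cos (((m + n + 2 : ℤ) : ℝ) * π * x)) / 2 := by
    intro x
    have h := two_mul_sin_mul_sin ((m + 1) * π * x) ((n + 1) * π * x)
    push_cast at h ⊢
    rw [show (m + 1) * π * x - (n + 1) * π * x = (m - n) * π * x by ring,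
      show (m + 1) * π * x + (n + 1) * π * x = (m + n + 2) * π * x by ring] at h
    linarith
  have hint : ∀ c : ℤ, IntervalIntegrable (fun x => cos (c * π * x)) volume 0 1 :=
    fun c => (continuous_cos.comp (by fun_prop)).intervalIntegrable _ _
  rw [intervalIntegral.integral_congr (fun x _ => hprod x), intervalIntegral.integral_div,
    intervalIntegral.integral_sub (hint _) (hint _), integral_cos_int_mul_pi_mul,
    integral_cos_int_mul_pi_mul, if_neg (by omega : (m + n + 2 : ℤ) ≠ 0)]
  by_cases h : m = n
  · simp [h]
  · rw [if_neg (by omega : (m - n : ℤ) ≠ 0), if_neg h]; norm_num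

theorem orthonormal_of_ae_eq_sqrt_two_mul_sin {d : ℕ → Lp ℝ 2 leb01}
    (hd : ∀ k : ℕ, ⇑(d k) =ᵐ[leb01] fun ξ => √2 * sin ((k + 1) * π * ξ)) :
    Orthonormal ℝ d := by
  rw [orthonormal_iff_ite]
  intro i j
  have hsin : (fun ξ => d j ξ * d i ξ) =ᵐ[leb01]
      fun ξ => 2 * (sin ((i + 1) * π * ξ) * sin ((j + 1) * π * ξ)) := by
    filter_upwards [hd i, hd j] with ξ hi hj
    rw [hi, hj]
    linear_combination (sin ((i + 1) * π * ξ) * sin ((j + 1) * π * ξ)) * sq_sqrt zero_le_two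
  rw [L2.inner_def]
  simp only [RCLike.inner_apply, conj_trivial]
  rw [integral_congr_ae hsin, leb01,
    ← integral_Ioc_eq_integral_Ioo, ← intervalIntegral.integral_of_le zero_le_one,
    intervalIntegral.integral_const_mul, integral_sin_mul_sin]
  split_ifs <;> norm_num

theorem Orthonormal.norm_sum_inner_smul_le {E ι : Type*} [NormedAddCommGroup E]
    [InnerProductSpace ℝ E] {v : ι → E} (hv : Orthonormal ℝ v) (x : E) (s : Finset ι) :
    ‖∑ i ∈ s, inner ℝ x (v i) • v i‖ ≤ ‖x‖ := by
  refine (pow_le_pow_iff_left₀ (norm_nonneg _) (norm_nonneg _) two_ne_zero).1 ?_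
  have hsum : ‖∑ i ∈ s, inner ℝ x (v i) • v i‖ ^ 2 = ∑ i ∈ s, ‖inner ℝ (v i) x‖ ^ 2 := by
    rw [← real_inner_self_eq_norm_sq, hv.inner_sum]
    refine Finset.sum_congr rfl fun i _ => ?_
    rw [conj_trivial, real_inner_comm x, Real.norm_eq_abs, sq_abs, sq]
  exact hsum ▸ hv.sum_inner_products_le x

section Comparison

variable {α : Type*} [MeasurableSpace α] {μ : Measure α} {φ : ℝ → ℝ}

theorem ofReal_norm_sq_eq_lintegral (f : Lp ℝ 2 μ) :
    ENNReal.ofReal (‖f‖ ^ 2) = ∫⁻ x, ENNReal.ofReal (f x ^ 2) ∂μ := by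
  rw [← real_inner_self_eq_norm_sq, L2.inner_def,
    ofReal_integral_eq_lintegral_ofReal (L2.integrable_inner f f)
      (ae_of_all _ fun x => real_inner_self_nonneg)]
  simp [sq]

theorem lintegral_ofReal_comp_le {A B : ℝ} (hA : 0 ≤ A) (hφ : ∀ x, φ x ≤ A * x ^ 2 + B)
    (f : Lp ℝ 2 μ) :
    ∫⁻ x, ENNReal.ofReal (φ (f x)) ∂μ
      ≤ ENNReal.ofReal (A * ‖f‖ ^ 2) + ENNReal.ofReal B * μ univ := by
  calc ∫⁻ x, ENNReal.ofReal (φ (f x)) ∂μ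
      ≤ ∫⁻ x, (ENNReal.ofReal A * ENNReal.ofReal (f x ^ 2) + ENNReal.ofReal B) ∂μ := by
        refine lintegral_mono fun x => ?_
        rw [← ENNReal.ofReal_mul hA]
        exact (ENNReal.ofReal_le_ofReal (hφ _)).trans ENNReal.ofReal_add_le
    _ = ENNReal.ofReal (A * ‖f‖ ^ 2) + ENNReal.ofReal B * μ univ := by
        rw [lintegral_add_right _ measurable_const, lintegral_const,
          lintegral_const_mul' _ _ ENNReal.ofReal_ne_top, ← ofReal_norm_sq_eq_lintegral,
          ENNReal.ofReal_mul hA]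

theorem ofReal_mul_norm_sq_le_lintegral {a : ℝ} (ha : 0 ≤ a) (hφ : ∀ x, a * x ^ 2 ≤ φ x)
    (f : Lp ℝ 2 μ) : ENNReal.ofReal (a * ‖f‖ ^ 2) ≤ ∫⁻ x, ENNReal.ofReal (φ (f x)) ∂μ := by
  calc ENNReal.ofReal (a * ‖f‖ ^ 2) = ∫⁻ x, ENNReal.ofReal a * ENNReal.ofReal (f x ^ 2) ∂μ := by
        rw [lintegral_const_mul' _ _ ENNReal.ofReal_ne_top, ← ofReal_norm_sq_eq_lintegral,
          ENNReal.ofReal_mul ha]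
    _ ≤ ∫⁻ x, ENNReal.ofReal (φ (f x)) ∂μ := by
        refine lintegral_mono fun x => ?_
        rw [← ENNReal.ofReal_mul ha]
        exact ENNReal.ofReal_le_ofReal (hφ _)

theorem lintegral_ofReal_comp_le_of_norm_le {a ε B : ℝ} (ha : 0 ≤ a) (hε : 0 ≤ ε)
    (hlower : ∀ x, a * x ^ 2 ≤ φ x) (hupper : ∀ x, φ x ≤ (a + ε) * x ^ 2 + B)
    {f g : Lp ℝ 2 μ} (hgf : ‖g‖ ≤ ‖f‖) :
    ∫⁻ x, ENNReal.ofReal (φ (g x)) ∂μ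
      ≤ ∫⁻ x, ENNReal.ofReal (φ (f x)) ∂μ + ENNReal.ofReal B * μ univ
        + ENNReal.ofReal (ε * ‖f‖ ^ 2) := by
  calc ∫⁻ x, ENNReal.ofReal (φ (g x)) ∂μ
      ≤ ENNReal.ofReal ((a + ε) * ‖g‖ ^ 2) + ENNReal.ofReal B * μ univ :=
        lintegral_ofReal_comp_le (by positivity) hupper g
    _ ≤ ENNReal.ofReal (a * ‖f‖ ^ 2) + ENNReal.ofReal (ε * ‖f‖ ^ 2)
          + ENNReal.ofReal B * μ univ := by
        rw [← ENNReal.ofReal_add (by positivity) (by positivity), ← add_mul]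
        gcongr
    _ ≤ ∫⁻ x, ENNReal.ofReal (φ (f x)) ∂μ + ENNReal.ofReal B * μ univ
        + ENNReal.ofReal (ε * ‖f‖ ^ 2) := by
        rw [add_right_comm]
        gcongr
        exact ofReal_mul_norm_sq_le_lintegral ha hlower f

end Comparison

theorem leb01_univ : leb01 univ = 1 := by
  simp [leb01]

theorem stmt8_general
    (a₁ a₂ a₃ : ℝ) (ha₁ : 0 ≤ a₁) (ha₂ : 0 ≤ a₂) (ha₃0 : 0 ≤ a₃) (ha₃ : a₃ < 2)
    (ψ : ℝ → ℝ) (hψ0 : ∀ x : ℝ, 0 ≤ ψ x)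
    (hψle : ∀ x : ℝ, ψ x ≤ 1 + a₂ * |x| ^ a₃)
    (d : ℕ → Lp ℝ 2 leb01)
    (hd : ∀ k : ℕ,
      ⇑(d k) =ᵐ[leb01] fun ξ => Real.sqrt 2 * Real.sin ((k+1) * Real.pi * ξ))
    (P : ℕ → Lp ℝ 2 leb01 → Lp ℝ 2 leb01)
    (hP : ∀ n x, P n x = ∑ k ∈ Finset.range n, (inner ℝ x (d k) : ℝ) • d k)
    (ε : ℝ) (hε : 0 < ε) :
    ∃ c : ℝ, 0 < c ∧ ∀ (u : Lp ℝ 2 leb01) (n : ℕ),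
      (∫⁻ ξ in Set.Ioo (0:ℝ) 1,
        ENNReal.ofReal (a₁ * (u ξ) ^ 2 + ψ (u ξ))) < ⊤ ∧
      (∫⁻ ξ in Set.Ioo (0:ℝ) 1,
        ENNReal.ofReal (a₁ * ((P n u) ξ) ^ 2 + ψ ((P n u) ξ))) < ⊤ ∧
      (∫⁻ ξ in Set.Ioo (0:ℝ) 1,
          ENNReal.ofReal (a₁ * ((P n u) ξ) ^ 2 + ψ ((P n u) ξ)))
        ≤ (∫⁻ ξ in Set.Ioo (0:ℝ) 1,
            ENNReal.ofReal (a₁ * (u ξ) ^ 2 + ψ (u ξ)))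
          + ENNReal.ofReal c + ENNReal.ofReal (ε * ‖u‖ ^ 2) := by
  obtain ⟨C, hC0, hC⟩ := exists_mul_abs_rpow_le_add_mul_sq ha₂ ha₃0 ha₃ hε
  have hupper (x : ℝ) : a₁ * x ^ 2 + ψ x ≤ (a₁ + ε) * x ^ 2 + (1 + C) := by
    linarith [hψle x, hC x]
  have hlower (x : ℝ) : a₁ * x ^ 2 ≤ a₁ * x ^ 2 + ψ x := by linarith [hψ0 x]
  have hfinite (f : Lp ℝ 2 leb01) :
      ∫⁻ ξ, ENNReal.ofReal (a₁ * f ξ ^ 2 + ψ (f ξ)) ∂leb01 < ⊤ := by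
    refine (lintegral_ofReal_comp_le (by positivity) hupper f).trans_lt ?_
    rw [leb01_univ]
    finiteness
  refine ⟨1 + C, by positivity, fun u n => ⟨hfinite u, hfinite (P n u), ?_⟩⟩
  have hPu : ‖P n u‖ ≤ ‖u‖ :=
    hP n u ▸ (orthonormal_of_ae_eq_sqrt_two_mul_sin hd).norm_sum_inner_smul_le u _
  have key := lintegral_ofReal_comp_le_of_norm_le ha₁ hε.le hlower hupper hPu
  rwa [leb01_univ, mul_one] at key

/-- Let `a₁, a₂ ∈ [0,∞)`, `a₃ ∈ [0,2)`, let `ψ : ℝ → [0,∞)` be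
continuous with `ψ(x) ≤ 1 + a₂|x|^{a₃}`, and set `φ(x) = a₁x² + ψ(x)`. Then for
every `ε > 0` there is `c ∈ (0,∞)` such that for all `u ∈ L²((0,1))` and all
`n`: `∫₀¹ φ((P_n u)(ξ)) dξ ≤ ∫₀¹ φ(u(ξ)) dξ + c + ε‖u‖²`, all integrals being
finite. Here `P_n` is the orthogonal projection onto the span of the first `n`
sine basis vectors `d_k = √2 sin(kπ·)`. -/
theorem stmt8
    (a₁ a₂ a₃ : ℝ) (ha₁ : 0 ≤ a₁) (ha₂ : 0 ≤ a₂) (ha₃0 : 0 ≤ a₃) (ha₃ : a₃ < 2)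
    (ψ : ℝ → ℝ) (hψc : Continuous ψ) (hψ0 : ∀ x : ℝ, 0 ≤ ψ x)
    (hψle : ∀ x : ℝ, ψ x ≤ 1 + a₂ * |x| ^ a₃)
    (d : ℕ → Lp ℝ 2 leb01)
    (hd : ∀ k : ℕ,
      ⇑(d k) =ᵐ[leb01] fun ξ => Real.sqrt 2 * Real.sin ((k+1) * Real.pi * ξ))
    (P : ℕ → Lp ℝ 2 leb01 → Lp ℝ 2 leb01)
    (hP : ∀ n x, P n x = ∑ k ∈ Finset.range n, (inner ℝ x (d k) : ℝ) • d k)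
    (ε : ℝ) (hε : 0 < ε) :
    ∃ c : ℝ, 0 < c ∧ ∀ (u : Lp ℝ 2 leb01) (n : ℕ),
      (∫⁻ ξ in Set.Ioo (0:ℝ) 1,
        ENNReal.ofReal (a₁ * (u ξ) ^ 2 + ψ (u ξ))) < ⊤ ∧
      (∫⁻ ξ in Set.Ioo (0:ℝ) 1,
        ENNReal.ofReal (a₁ * ((P n u) ξ) ^ 2 + ψ ((P n u) ξ))) < ⊤ ∧
      (∫⁻ ξ in Set.Ioo (0:ℝ) 1,
          ENNReal.ofReal (a₁ * ((P n u) ξ) ^ 2 + ψ ((P n u) ξ)))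
        ≤ (∫⁻ ξ in Set.Ioo (0:ℝ) 1,
            ENNReal.ofReal (a₁ * (u ξ) ^ 2 + ψ (u ξ)))
          + ENNReal.ofReal c + ENNReal.ofReal (ε * ‖u‖ ^ 2) :=
  stmt8_general a₁ a₂ a₃ ha₁ ha₂ ha₃0 ha₃ ψ hψ0 hψle d hd P hP ε hε
end
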